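/- The map (ρ₁, ρ₂) ↦ √(1 − G(ρ₁,ρ₂)), where G is the super-fidelity G(ρ₁,ρ₂) = tr(ρ₁ρ₂) + √((1-tr ρ₁²)(1-tr ρ₂²)), satisfies the triangle inequality on density matrices: √(1−G(ρ₁,ρ₃)) ≤ √(1−G(ρ₁,ρ₂)) + √(1−G(ρ₂,ρ₃)). -/

import Mathlib

/-!
Send a density matrix `ρ` to `ξ ρ = (ρ, √(1 - tr ρ²))` in the real Hilbert space
`ℂ^(n×n) × ℝ`, where the real inner product on `ℂ^(n×n)` is `re tr(Aᴴ B)`. As `ρ ≥ 0`,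
`tr ρ² = ∑ λᵢ² ≤ (∑ λᵢ)² = 1`, so `ξ ρ` is a unit vector, and `G(ρ, σ) = ⟪ξ ρ, ξ σ⟫`.
For unit vectors `‖u - v‖ = √2 · √(1 - ⟪u, v⟫)`, hence `√(1 - G)` is a rescaled Euclidean
distance and satisfies the triangle inequality.
-/

open Matrix ComplexOrder

/-- Super-fidelity `G(X,Y) = tr(XY) + √((1-tr X²)(1-tr Y²))`. -/
noncomputable def supFid {n : Type*} [Fintype n] (X Y : Matrix n n ℂ) : ℝ :=
  ((X * Y).trace).re +
    Real.sqrt ((1 - ((X * X).trace).re) * (1 - ((Y * Y).trace).re))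

open RealInnerProductSpace

section UnitVectors

variable {F : Type*} [NormedAddCommGroup F] [InnerProductSpace ℝ F]

theorem dist_eq_sqrt_two_mul_sqrt_one_sub_inner {u v : F} (hu : ‖u‖ = 1) (hv : ‖v‖ = 1) :
    dist u v = √2 * √(1 - ⟪u, v⟫) := by
  rw [dist_eq_norm, ← Real.sqrt_mul zero_le_two, ← Real.sqrt_sq (norm_nonneg _), norm_sub_sq_real,
    hu, hv]
  ring_nf

theorem sqrt_one_sub_inner_le_add {u v w : F} (hu : ‖u‖ = 1) (hv : ‖v‖ = 1) (hw : ‖w‖ = 1) :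
    √(1 - ⟪u, w⟫) ≤ √(1 - ⟪u, v⟫) + √(1 - ⟪v, w⟫) := by
  have h := dist_triangle u v w
  rw [dist_eq_sqrt_two_mul_sqrt_one_sub_inner hu hw, dist_eq_sqrt_two_mul_sqrt_one_sub_inner hu hv,
    dist_eq_sqrt_two_mul_sqrt_one_sub_inner hv hw, ← mul_add] at h
  exact le_of_mul_le_mul_left h (by positivity)

end UnitVectors

namespace Matrix

theorem real_inner_toLp_uncurry {m n : Type*} [Fintype m] [Fintype n] (A B : Matrix m n ℂ) :
    ⟪(WithLp.toLp 2 (Function.uncurry A) : EuclideanSpace ℂ (m × n)),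
      WithLp.toLp 2 (Function.uncurry B)⟫ = (Aᴴ * B).trace.re := by
  simp only [PiLp.inner_apply, Complex.inner, Fintype.sum_prod_type, trace, diag, mul_apply,
    Complex.re_sum]
  rw [Finset.sum_comm]
  simp [Function.uncurry, mul_comm]

variable {𝕜 n : Type*} [RCLike 𝕜] [Fintype n] [DecidableEq n] {A : Matrix n n 𝕜}

theorem IsHermitian.trace_mul_self_eq_sum_eigenvalues_sq (hA : A.IsHermitian) :
    (A * A).trace = ∑ i, ((hA.eigenvalues i ^ 2 : ℝ) : 𝕜) := by
  conv_lhs => rw [hA.spectral_theorem, ← map_mul, Unitary.conjStarAlgAut_apply, trace_mul_cycle,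
    Unitary.coe_star_mul_self, one_mul, diagonal_mul_diagonal, trace_diagonal]
  simp [sq]

theorem PosSemidef.re_trace_mul_self_le_sq (hA : A.PosSemidef) :
    RCLike.re (A * A).trace ≤ RCLike.re A.trace ^ 2 := by
  rw [hA.1.trace_mul_self_eq_sum_eigenvalues_sq, hA.1.trace_eq_sum_eigenvalues]
  simpa using Finset.sum_sq_le_sq_sum_of_nonneg fun i _ ↦ hA.eigenvalues_nonneg i

theorem PosSemidef.re_trace_mul_self_le_one (hA : A.PosSemidef) (hA₁ : A.trace = 1) :
    RCLike.re (A * A).trace ≤ 1 := by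
  simpa [hA₁] using hA.re_trace_mul_self_le_sq

end Matrix

section SuperFidelityEmbedding

variable {n : Type*} [Fintype n] {ρ : Matrix n n ℂ}

noncomputable def superFidelityEmbedding (ρ : Matrix n n ℂ) :
    WithLp 2 (EuclideanSpace ℂ (n × n) × ℝ) :=
  WithLp.toLp 2 (WithLp.toLp 2 (Function.uncurry ρ), √(1 - (ρ * ρ).trace.re))

theorem inner_superFidelityEmbedding (hρ : ρ.IsHermitian) (hρρ : (ρ * ρ).trace.re ≤ 1)
    (σ : Matrix n n ℂ) :
    ⟪superFidelityEmbedding ρ, superFidelityEmbedding σ⟫ = supFid ρ σ := by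
  rw [WithLp.prod_inner_apply]
  simp only [superFidelityEmbedding, real_inner_toLp_uncurry, hρ.eq, RCLike.inner_apply,
    conj_trivial]
  rw [supFid, Real.sqrt_mul (by linarith), mul_comm]

theorem norm_superFidelityEmbedding (hρ : ρ.IsHermitian) (hρρ : (ρ * ρ).trace.re ≤ 1) :
    ‖superFidelityEmbedding ρ‖ = 1 := by
  have h := real_inner_self_eq_norm_sq (superFidelityEmbedding ρ)
  rw [inner_superFidelityEmbedding hρ hρρ, supFid, Real.sqrt_mul_self (by linarith)] at h
  exact (pow_eq_one_iff_of_nonneg (norm_nonneg _) two_ne_zero).mp (by linarith)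

end SuperFidelityEmbedding

theorem rootInfidelity_triangle {N : ℕ} (ρ₁ ρ₂ ρ₃ : Matrix (Fin N) (Fin N) ℂ)
    (h1 : ρ₁.PosSemidef) (h2 : ρ₂.PosSemidef) (h3 : ρ₃.PosSemidef)
    (t1 : ρ₁.trace = 1) (t2 : ρ₂.trace = 1) (t3 : ρ₃.trace = 1) :
    Real.sqrt (1 - supFid ρ₁ ρ₃) ≤
      Real.sqrt (1 - supFid ρ₁ ρ₂) + Real.sqrt (1 - supFid ρ₂ ρ₃) := by
  have unit {ρ : Matrix (Fin N) (Fin N) ℂ} (h : ρ.PosSemidef) (t : ρ.trace = 1) :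
      ‖superFidelityEmbedding ρ‖ = 1 :=
    norm_superFidelityEmbedding h.1 (h.re_trace_mul_self_le_one t)
  rw [← inner_superFidelityEmbedding h1.1 (h1.re_trace_mul_self_le_one t1) ρ₂,
    ← inner_superFidelityEmbedding h1.1 (h1.re_trace_mul_self_le_one t1) ρ₃,
    ← inner_superFidelityEmbedding h2.1 (h2.re_trace_mul_self_le_one t2) ρ₃]
  exact sqrt_one_sub_inner_le_add (unit h1 t1) (unit h2 t2) (unit h3 t3)
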